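/- Integrated information Gamma operator as a drift-Jacobian form (key step in the proof of Proposition 3.4): let f : ℝ^d → ℝ be smooth with compact support and set p := π·e^f. Then ∫_{ℝ^d} Γ_I(f,f)(x) p(x) dx = −∫_{ℝ^d} Σ_{i,j} ∂γ_j/∂x_i(x) · ∂f/∂x_i(x) · ∂f/∂x_j(x) · p(x) dx. -/

import Mathlib

open MeasureTheory
open scoped BigOperators

noncomputable section

/-- `i`-th partial derivative of `f` at `x`, in the coordinate direction `i`. -/
def pderiv' {d : ℕ} (f : EuclideanSpace ℝ (Fin d) → ℝ) (i : Fin d)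
    (x : EuclideanSpace ℝ (Fin d)) : ℝ :=
  fderiv ℝ f x (EuclideanSpace.single i 1)

/-- second partial derivative `∂_i ∂_j f` at `x`. -/
def pderiv2 {d : ℕ} (f : EuclideanSpace ℝ (Fin d) → ℝ) (i j : Fin d)
    (x : EuclideanSpace ℝ (Fin d)) : ℝ :=
  pderiv' (fun y => pderiv' f j y) i x

/-- Laplacian `Δf`. -/
def lap {d : ℕ} (f : EuclideanSpace ℝ (Fin d) → ℝ) (x : EuclideanSpace ℝ (Fin d)) : ℝ :=
  ∑ i, pderiv2 f i i x

/-- carré du champ `Γ₁(g,h) = ⟨∇g, ∇h⟩`. -/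
def Gamma1 {d : ℕ} (g h : EuclideanSpace ℝ (Fin d) → ℝ) (x : EuclideanSpace ℝ (Fin d)) : ℝ :=
  ∑ i, pderiv' g i x * pderiv' h i x

/-- generator `L̃ h = ⟨∇ log π, ∇h⟩ + Δh`. -/
def genL {d : ℕ} (π h : EuclideanSpace ℝ (Fin d) → ℝ) (x : EuclideanSpace ℝ (Fin d)) : ℝ :=
  Gamma1 (fun y => Real.log (π y)) h x + lap h x

/-- Gamma two operator `Γ₂(f,f) = ½ L̃ Γ₁(f,f) − Γ₁(L̃f, f)`. -/
def Gamma2 {d : ℕ} (π f : EuclideanSpace ℝ (Fin d) → ℝ) (x : EuclideanSpace ℝ (Fin d)) : ℝ :=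
  (1/2 : ℝ) * genL π (fun y => Gamma1 f f y) x - Gamma1 (fun y => genL π f y) f x

/-- information Gamma operator `Γ_I(f,f) = −½⟨γ, ∇Γ₁(f,f)⟩ + (L̃f)·⟨∇f, γ⟩`. -/
def GammaI {d : ℕ} (π : EuclideanSpace ℝ (Fin d) → ℝ)
    (γ : EuclideanSpace ℝ (Fin d) → EuclideanSpace ℝ (Fin d))
    (f : EuclideanSpace ℝ (Fin d) → ℝ) (x : EuclideanSpace ℝ (Fin d)) : ℝ :=
  -(1/2 : ℝ) * (∑ i, γ x i * pderiv' (fun y => Gamma1 f f y) i x)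
    + genL π f x * (∑ i, pderiv' f i x * γ x i)

/-- the tensor `ℜ` of the paper:
`ℜ_{ij} = −∂²_{ij} log π + ((3−2d)/8) γ_i γ_j − (1/8) δ_{ij} Σ_k γ_k²
          + ½(γ_i ∂_j log π + γ_j ∂_i log π)`. -/
def Rtensor {d : ℕ} (π : EuclideanSpace ℝ (Fin d) → ℝ)
    (γ : EuclideanSpace ℝ (Fin d) → EuclideanSpace ℝ (Fin d))
    (i j : Fin d) (x : EuclideanSpace ℝ (Fin d)) : ℝ :=
  -pderiv2 (fun y => Real.log (π y)) i j x
    + ((3 - 2 * (d : ℝ)) / 8) * γ x i * γ x j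
    - (1/8 : ℝ) * (if i = j then ∑ k, (γ x k) ^ 2 else 0)
    + (1/2 : ℝ) * (γ x i * pderiv' (fun y => Real.log (π y)) j x
        + γ x j * pderiv' (fun y => Real.log (π y)) i x)

/-- the modified Hessian matrix `𝔥ess f`. -/
def hessM {d : ℕ} (γ : EuclideanSpace ℝ (Fin d) → EuclideanSpace ℝ (Fin d))
    (f : EuclideanSpace ℝ (Fin d) → ℝ) (i j : Fin d) (x : EuclideanSpace ℝ (Fin d)) : ℝ :=
  if i = j then
    pderiv2 f i i x + (1/2 : ℝ) * (∑ k, γ x k * pderiv' f k x)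
      - (1/2 : ℝ) * γ x i * pderiv' f i x
  else
    pderiv2 f i j x - (1/4 : ℝ) * (γ x i * pderiv' f j x + γ x j * pderiv' f i x)

/-- right-hand side of the Fokker–Planck equation `−∇·(p b) + Δp` with drift
`b = ∇ log π − γ`, evaluated at a density `p`. -/
def FPrhs {d : ℕ} (π : EuclideanSpace ℝ (Fin d) → ℝ)
    (γ : EuclideanSpace ℝ (Fin d) → EuclideanSpace ℝ (Fin d))
    (p : EuclideanSpace ℝ (Fin d) → ℝ) (x : EuclideanSpace ℝ (Fin d)) : ℝ :=
  -(∑ i, pderiv' (fun y => p y * (pderiv' (fun z => Real.log (π z)) i y - γ y i)) i x)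
    + lap p x

/-- `L̃* p = −∇·(p ∇ log π) + Δp`. -/
def Ltilstar {d : ℕ} (π p : EuclideanSpace ℝ (Fin d) → ℝ)
    (x : EuclideanSpace ℝ (Fin d)) : ℝ :=
  -(∑ i, pderiv' (fun y => p y * pderiv' (fun z => Real.log (π z)) i y) i x) + lap p x

/-- Arnold–Carlen tensor `(ℜ_AC)_{ij} = −∂²_{ij} log π − ½(∂_i γ_j + ∂_j γ_i)`. -/
def RAC {d : ℕ} (π : EuclideanSpace ℝ (Fin d) → ℝ)
    (γ : EuclideanSpace ℝ (Fin d) → EuclideanSpace ℝ (Fin d))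
    (i j : Fin d) (x : EuclideanSpace ℝ (Fin d)) : ℝ :=
  -pderiv2 (fun y => Real.log (π y)) i j x
    - (1/2 : ℝ) * (pderiv' (fun y => γ y j) i x + pderiv' (fun y => γ y i) j x)

/-! With `p = π e^f`, `φ = ⟨∇f, γ⟩` and `G = Γ₁(f,f)`, stationarity gives `∇·(p γ) = p φ`, the
definition of `L̃` gives `∇·(p ∇f) = p (L̃f + G)`, and the symmetry of the Hessian gives
`⟨∇φ, ∇f⟩ = ½ ⟨γ, ∇G⟩ + ∇γ(∇f, ∇f)`. Together they make `(Γ_I(f,f) + ∇γ(∇f, ∇f)) p` the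
divergence of the compactly supported field `φ p ∇f − G p γ`, whose integral vanishes. -/

theorem hasCompactSupport_sum {α β ι : Type*} [TopologicalSpace α] [AddCommMonoid β]
    {s : Finset ι} {F : ι → α → β} (h : ∀ j ∈ s, HasCompactSupport (F j)) :
    HasCompactSupport (fun y => ∑ j ∈ s, F j y) := by
  simpa only [Finset.sum_fn] using HasCompactSupport.finset_sum h

section Calculus

variable {d : ℕ}

local notation "E" => EuclideanSpace ℝ (Fin d)

def divergence (u : Fin d → E → ℝ) (x : E) : ℝ :=
  ∑ i, pderiv' (u i) i x

theorem HasCompactSupport.pderiv' {f : E → ℝ} (hf : HasCompactSupport f) (i : Fin d) :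
    HasCompactSupport (pderiv' f i) :=
  hf.fderiv_apply ℝ _

theorem ContDiff.pderiv' {n m : WithTop ℕ∞} {f : E → ℝ} (hf : ContDiff ℝ n f) (hmn : m + 1 ≤ n)
    (i : Fin d) : ContDiff ℝ m (pderiv' f i) :=
  (hf.fderiv_right hmn).clm_apply contDiff_const

theorem ContDiff.continuous_pderiv' {f : E → ℝ} (hf : ContDiff ℝ 1 f) (i : Fin d) :
    Continuous (_root_.pderiv' f i) :=
  (hf.pderiv' (m := 0) (by norm_num) i).continuous

theorem pderiv'_mul {a b : E → ℝ} {x : E} (ha : DifferentiableAt ℝ a x)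
    (hb : DifferentiableAt ℝ b x) (i : Fin d) :
    pderiv' (fun y => a y * b y) i x = pderiv' a i x * b x + a x * pderiv' b i x := by
  simp [pderiv', fderiv_fun_mul ha hb, mul_comm, add_comm]

theorem pderiv'_sub {a b : E → ℝ} {x : E} (ha : DifferentiableAt ℝ a x)
    (hb : DifferentiableAt ℝ b x) (i : Fin d) :
    pderiv' (fun y => a y - b y) i x = pderiv' a i x - pderiv' b i x := by
  simp [pderiv', fderiv_fun_sub ha hb]

theorem pderiv'_sum {ι : Type*} {s : Finset ι} {F : ι → E → ℝ} {x : E}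
    (h : ∀ j ∈ s, DifferentiableAt ℝ (F j) x) (i : Fin d) :
    pderiv' (fun y => ∑ j ∈ s, F j y) i x = ∑ j ∈ s, pderiv' (F j) i x := by
  simp [pderiv', fderiv_fun_sum h]

theorem pderiv'_exp {f : E → ℝ} {x : E} (hf : DifferentiableAt ℝ f x) (i : Fin d) :
    pderiv' (fun y => Real.exp (f y)) i x = Real.exp (f x) * pderiv' f i x := by
  simp [pderiv', fderiv_exp hf]

theorem pderiv'_log {f : E → ℝ} {x : E} (hf : DifferentiableAt ℝ f x) (hx : f x ≠ 0)
    (i : Fin d) : pderiv' (fun y => Real.log (f y)) i x = pderiv' f i x / f x := by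
  simp [pderiv', (hf.hasFDerivAt.log hx).fderiv, div_eq_inv_mul]

theorem pderiv2_comm {f : E → ℝ} {x : E} (hf : ContDiffAt ℝ 2 f x) (i j : Fin d) :
    pderiv2 f i j x = pderiv2 f j i x := by
  have hdiff : DifferentiableAt ℝ (fderiv ℝ f) x :=
    (hf.fderiv_right (m := 1) le_rfl).differentiableAt one_ne_zero
  have hsecond : ∀ k l : Fin d, pderiv2 f k l x =
      fderiv ℝ (fderiv ℝ f) x (EuclideanSpace.single k 1) (EuclideanSpace.single l 1) := by
    intro k l
    simp [pderiv2, pderiv', fderiv_clm_apply hdiff (differentiableAt_const _)]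
  rw [hsecond, hsecond]
  exact hf.isSymmSndFDerivAt (by simp) _ _

theorem ContDiff.differentiable_pderiv' {f : E → ℝ} (hf : ContDiff ℝ 2 f) (i : Fin d) :
    Differentiable ℝ (_root_.pderiv' f i) :=
  (hf.pderiv' (m := 1) (by norm_num) i).differentiable one_ne_zero

theorem divergence_mul {h : E → ℝ} {u : Fin d → E → ℝ} {x : E} (hh : DifferentiableAt ℝ h x)
    (hu : ∀ i, DifferentiableAt ℝ (u i) x) :
    divergence (fun i y => h y * u i y) x = ∑ i, pderiv' h i x * u i x + h x * divergence u x := by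
  simp only [divergence, pderiv'_mul hh (hu _), Finset.sum_add_distrib, Finset.mul_sum]

theorem divergence_sub {u v : Fin d → E → ℝ} {x : E} (hu : ∀ i, DifferentiableAt ℝ (u i) x)
    (hv : ∀ i, DifferentiableAt ℝ (v i) x) :
    divergence (fun i y => u i y - v i y) x = divergence u x - divergence v x := by
  simp only [divergence, pderiv'_sub (hu _) (hv _), Finset.sum_sub_distrib]

theorem integrable_pderiv' {g : E → ℝ} (hg : ContDiff ℝ 1 g) (hgc : HasCompactSupport g)
    (i : Fin d) : Integrable (pderiv' g i) :=
  (hg.continuous_pderiv' i).integrable_of_hasCompactSupport (hgc.pderiv' i)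

theorem integral_pderiv'_eq_zero {g : E → ℝ} (hg : ContDiff ℝ 1 g) (hgc : HasCompactSupport g)
    (i : Fin d) : ∫ x, pderiv' g i x = 0 := by
  have h := integral_mul_fderiv_eq_neg_fderiv_mul_of_integrable (μ := volume)
    (f := fun _ => (1 : ℝ)) (g := g) (v := EuclideanSpace.single i 1) (by simp)
    (by simp only [one_mul]; exact integrable_pderiv' hg hgc i)
    (by simpa using hg.continuous.integrable_of_hasCompactSupport hgc)
    (fun _ _ => differentiableAt_const _) (fun x _ => hg.differentiable one_ne_zero x)
  simpa [pderiv'] using h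

theorem integrable_divergence {u : Fin d → E → ℝ} (hu : ∀ i, ContDiff ℝ 1 (u i))
    (huc : ∀ i, HasCompactSupport (u i)) : Integrable (divergence u) :=
  integrable_finsetSum _ fun i _ => integrable_pderiv' (hu i) (huc i) i

theorem integral_divergence_eq_zero {u : Fin d → E → ℝ} (hu : ∀ i, ContDiff ℝ 1 (u i))
    (huc : ∀ i, HasCompactSupport (u i)) : ∫ x, divergence u x = 0 := by
  simp only [divergence]
  rw [integral_finsetSum _ fun i _ => integrable_pderiv' (hu i) (huc i) i]
  exact Finset.sum_eq_zero fun i _ => integral_pderiv'_eq_zero (hu i) (huc i) i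

theorem pderiv'_Gamma1_self {f : E → ℝ} {x : E} (hf : ∀ i, DifferentiableAt ℝ (pderiv' f i) x)
    (j : Fin d) : pderiv' (Gamma1 f f) j x = 2 * ∑ i, pderiv' f i x * pderiv2 f j i x := by
  change pderiv' (fun y => ∑ i, pderiv' f i y * pderiv' f i y) j x = _
  rw [pderiv'_sum (fun i _ => (hf i).fun_mul (hf i)), Finset.mul_sum]
  exact Finset.sum_congr rfl fun i _ => by rw [pderiv'_mul (hf i) (hf i)]; simp only [pderiv2]; ring

theorem Gamma1_sum_pderiv'_mul {f : E → ℝ} {u : Fin d → E → ℝ} {x : E} (hf : ContDiff ℝ 2 f)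
    (hu : ∀ j, DifferentiableAt ℝ (u j) x) :
    Gamma1 (fun y => ∑ j, pderiv' f j y * u j y) f x =
      (1 / 2) * ∑ j, u j x * pderiv' (Gamma1 f f) j x
        + ∑ i, ∑ j, pderiv' (u j) i x * pderiv' f i x * pderiv' f j x := by
  have hdf : ∀ j, DifferentiableAt ℝ (pderiv' f j) x := fun j => hf.differentiable_pderiv' j x
  have hφ : ∀ i, pderiv' (fun y => ∑ j, pderiv' f j y * u j y) i x =
      ∑ j, (pderiv2 f i j x * u j x + pderiv' f j x * pderiv' (u j) i x) := by
    intro i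
    rw [pderiv'_sum fun j _ => (hdf j).fun_mul (hu j)]
    exact Finset.sum_congr rfl fun j _ => pderiv'_mul (hdf j) (hu j) i
  have hsym : (1 / 2) * ∑ j, u j x * pderiv' (Gamma1 f f) j x =
      ∑ i, ∑ j, pderiv2 f i j x * u j x * pderiv' f i x := by
    simp only [pderiv'_Gamma1_self hdf, Finset.mul_sum]
    rw [Finset.sum_comm]
    refine Finset.sum_congr rfl fun i _ => Finset.sum_congr rfl fun j _ => ?_
    rw [pderiv2_comm hf.contDiffAt j i]
    ring
  rw [hsym, ← Finset.sum_add_distrib]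
  simp only [Gamma1, hφ]
  refine Finset.sum_congr rfl fun i _ => ?_
  rw [Finset.sum_mul, ← Finset.sum_add_distrib]
  exact Finset.sum_congr rfl fun j _ => by ring

theorem divergence_mul_exp_pderiv' {π f : E → ℝ} {x : E} (hπ : DifferentiableAt ℝ π x)
    (hπx : π x ≠ 0) (hf : ContDiff ℝ 2 f) :
    divergence (fun i y => π y * Real.exp (f y) * pderiv' f i y) x =
      (genL π f x + Gamma1 f f x) * (π x * Real.exp (f x)) := by
  have hfx : DifferentiableAt ℝ f x := hf.differentiable two_ne_zero x
  have hp : ∀ i, pderiv' (fun y => π y * Real.exp (f y)) i x =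
      (pderiv' π i x / π x + pderiv' f i x) * (π x * Real.exp (f x)) := by
    intro i
    rw [pderiv'_mul hπ hfx.exp, pderiv'_exp hfx]
    field_simp
  rw [divergence_mul (hπ.fun_mul hfx.exp) fun i => hf.differentiable_pderiv' i x]
  change _ + _ * lap f x = _
  simp only [hp, genL, Gamma1, lap, pderiv'_log hπ hπx, Finset.mul_sum, Finset.sum_mul,
    ← Finset.sum_add_distrib]
  exact Finset.sum_congr rfl fun i _ => by ring

theorem divergence_mul_exp_of_divergence_eq_zero {π f : E → ℝ} {u : Fin d → E → ℝ} {x : E}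
    (hf : DifferentiableAt ℝ f x) (hπu : ∀ i, DifferentiableAt ℝ (fun y => π y * u i y) x)
    (hdiv : divergence (fun i y => π y * u i y) x = 0) :
    divergence (fun i y => π y * Real.exp (f y) * u i y) x =
      π x * Real.exp (f x) * ∑ i, pderiv' f i x * u i x := by
  have hassoc : (fun i y => π y * Real.exp (f y) * u i y) =
      fun i y => Real.exp (f y) * (π y * u i y) := by
    ext i y
    ring
  rw [hassoc, divergence_mul hf.exp hπu, hdiv, mul_zero, add_zero]
  simp only [pderiv'_exp hf, Finset.mul_sum]
  exact Finset.sum_congr rfl fun i _ => by ring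

theorem contDiff_Gamma1 {n : WithTop ℕ∞} {g h : E → ℝ} (hg : ContDiff ℝ (n + 1) g)
    (hh : ContDiff ℝ (n + 1) h) : ContDiff ℝ n (Gamma1 g h) :=
  ContDiff.sum fun i _ => (hg.pderiv' le_rfl i).mul (hh.pderiv' le_rfl i)

theorem HasCompactSupport.Gamma1_left {g : E → ℝ} (hg : HasCompactSupport g) (h : E → ℝ) :
    HasCompactSupport (Gamma1 g h) :=
  hasCompactSupport_sum fun i _ => (hg.pderiv' i).mul_right

def gammaIFlux (π : E → ℝ) (γ : E → E) (f : E → ℝ) (i : Fin d) (y : E) : ℝ :=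
  (∑ j, pderiv' f j y * γ y j) * (π y * Real.exp (f y) * pderiv' f i y)
    - Gamma1 f f y * (π y * Real.exp (f y) * γ y i)

theorem contDiff_gammaIFlux {n : WithTop ℕ∞} {π f : E → ℝ} {γ : E → E} (hπ : ContDiff ℝ n π)
    (hγ : ContDiff ℝ n γ) (hf : ContDiff ℝ (n + 1) f) (i : Fin d) :
    ContDiff ℝ n (gammaIFlux π γ f i) := by
  have hγi : ∀ j, ContDiff ℝ n (fun y => γ y j) := (contDiff_piLp 2).1 hγ
  have hdf : ∀ j, ContDiff ℝ n (pderiv' f j) := fun j => hf.pderiv' le_rfl j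
  have hp : ContDiff ℝ n (fun y => π y * Real.exp (f y)) := hπ.mul (hf.of_le le_self_add).exp
  exact ((ContDiff.sum fun j _ => (hdf j).mul (hγi j)).mul (hp.mul (hdf i))).sub
    ((contDiff_Gamma1 hf hf).mul (hp.mul (hγi i)))

theorem HasCompactSupport.gammaIFlux {f : E → ℝ} (hf : HasCompactSupport f) (π : E → ℝ)
    (γ : E → E) (i : Fin d) : HasCompactSupport (_root_.gammaIFlux π γ f i) :=
  (hasCompactSupport_sum fun j _ => (hf.pderiv' j).mul_right).mul_right.sub
    (hf.Gamma1_left f).mul_right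

theorem GammaI_mul_eq_divergence_gammaIFlux_sub {π f : E → ℝ} {γ : E → E} {x : E}
    (hπ : DifferentiableAt ℝ π x) (hπx : π x ≠ 0)
    (hγ : ∀ i, DifferentiableAt ℝ (fun y => γ y i) x) (hf : ContDiff ℝ 2 f)
    (hstat : divergence (fun i y => π y * γ y i) x = 0) :
    GammaI π γ f x * (π x * Real.exp (f x)) =
      divergence (gammaIFlux π γ f) x
        - (∑ i, ∑ j, pderiv' (fun y => γ y j) i x * pderiv' f i x * pderiv' f j x)
          * (π x * Real.exp (f x)) := by
  have hfx : DifferentiableAt ℝ f x := hf.differentiable two_ne_zero x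
  have hdf : ∀ i, DifferentiableAt ℝ (pderiv' f i) x := fun i => hf.differentiable_pderiv' i x
  have hp : DifferentiableAt ℝ (fun y => π y * Real.exp (f y)) x := hπ.fun_mul hfx.exp
  have hφ : DifferentiableAt ℝ (fun y => ∑ j, pderiv' f j y * γ y j) x :=
    DifferentiableAt.fun_sum fun j _ => (hdf j).fun_mul (hγ j)
  have hG : DifferentiableAt ℝ (Gamma1 f f) x :=
    (contDiff_Gamma1 (n := 1) hf hf).differentiable one_ne_zero x
  unfold gammaIFlux
  rw [divergence_sub (fun i => hφ.fun_mul (hp.fun_mul (hdf i)))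
      (fun i => hG.fun_mul (hp.fun_mul (hγ i))),
    divergence_mul hφ (fun i => hp.fun_mul (hdf i)),
    divergence_mul hG (fun i => hp.fun_mul (hγ i)),
    divergence_mul_exp_pderiv' hπ hπx hf,
    divergence_mul_exp_of_divergence_eq_zero hfx (fun i => hπ.fun_mul (hγ i)) hstat]
  have hφf : ∑ i, pderiv' (fun y => ∑ j, pderiv' f j y * γ y j) i x
      * (π x * Real.exp (f x) * pderiv' f i x) =
      π x * Real.exp (f x) * Gamma1 (fun y => ∑ j, pderiv' f j y * γ y j) f x := by
    simp only [Gamma1, Finset.mul_sum]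
    exact Finset.sum_congr rfl fun i _ => by ring
  have hGγ : ∑ i, pderiv' (Gamma1 f f) i x * (π x * Real.exp (f x) * γ x i) =
      π x * Real.exp (f x) * ∑ i, γ x i * pderiv' (Gamma1 f f) i x := by
    simp only [Finset.mul_sum]
    exact Finset.sum_congr rfl fun i _ => by ring
  rw [hφf, hGγ, Gamma1_sum_pderiv'_mul hf hγ]
  unfold GammaI
  ring

end Calculus

theorem integrated_gamma_I_drift_jacobian_general
    (d : ℕ)
    (π : EuclideanSpace ℝ (Fin d) → ℝ) (hπ : ContDiff ℝ (⊤ : ℕ∞) π)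
    (hπpos : ∀ x, 0 < π x)
    (γ : EuclideanSpace ℝ (Fin d) → EuclideanSpace ℝ (Fin d))
    (hγ : ContDiff ℝ (⊤ : ℕ∞) γ)
    (hstat : ∀ x, ∑ i, pderiv' (fun y => π y * γ y i) i x = 0)
    (f : EuclideanSpace ℝ (Fin d) → ℝ) (hf : ContDiff ℝ (⊤ : ℕ∞) f)
    (hfc : HasCompactSupport f) :
    ∫ x, GammaI π γ f x * (π x * Real.exp (f x)) =
      -∫ x, (∑ i, ∑ j, pderiv' (fun y => γ y j) i x * pderiv' f i x * pderiv' f j x)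
          * (π x * Real.exp (f x)) := by
  have hγi : ∀ i, ContDiff ℝ 1 (fun y => γ y i) := (contDiff_piLp 2).1 (contDiff_infty.1 hγ 1)
  have hf2 : ContDiff ℝ 2 f := contDiff_infty.1 hf 2
  have hflux : ∀ i, ContDiff ℝ 1 (gammaIFlux π γ f i) :=
    contDiff_gammaIFlux (contDiff_infty.1 hπ 1) (contDiff_infty.1 hγ 1) hf2
  have hfluxc : ∀ i, HasCompactSupport (gammaIFlux π γ f i) := hfc.gammaIFlux π γ
  have hdf : ∀ i, Continuous (pderiv' f i) := (contDiff_infty.1 hf 1).continuous_pderiv'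
  have hdγ : ∀ i j, Continuous (pderiv' (fun y => γ y j) i) :=
    fun i j => (hγi j).continuous_pderiv' i
  have hT : Integrable (fun x => (∑ i, ∑ j, pderiv' (fun y => γ y j) i x * pderiv' f i x
      * pderiv' f j x) * (π x * Real.exp (f x))) :=
    Continuous.integrable_of_hasCompactSupport (by fun_prop) (hasCompactSupport_sum fun i _ =>
      hasCompactSupport_sum fun j _ => (hfc.pderiv' j).mul_left).mul_right
  have hpointwise := fun x => GammaI_mul_eq_divergence_gammaIFlux_sub (x := x)
    (hπ.differentiable (by simp) x) (hπpos x).ne'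
    (fun i => (hγi i).differentiable one_ne_zero x) hf2 (hstat x)
  rw [funext hpointwise, integral_sub (integrable_divergence hflux hfluxc) hT,
    integral_divergence_eq_zero hflux hfluxc, zero_sub]

/-- Key step in the proof of Proposition 3.4, with `p = π e^f`:
`∫ Γ_I(f,f) p = −∫ ∇γ(∇f, ∇f) p`. -/
theorem integrated_gamma_I_drift_jacobian
    (d : ℕ) (hd : 1 ≤ d)
    (π : EuclideanSpace ℝ (Fin d) → ℝ) (hπ : ContDiff ℝ (⊤ : ℕ∞) π)
    (hπpos : ∀ x, 0 < π x)
    (γ : EuclideanSpace ℝ (Fin d) → EuclideanSpace ℝ (Fin d))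
    (hγ : ContDiff ℝ (⊤ : ℕ∞) γ)
    (hstat : ∀ x, ∑ i, pderiv' (fun y => π y * γ y i) i x = 0)
    (f : EuclideanSpace ℝ (Fin d) → ℝ) (hf : ContDiff ℝ (⊤ : ℕ∞) f)
    (hfc : HasCompactSupport f) :
    ∫ x, GammaI π γ f x * (π x * Real.exp (f x)) =
      -∫ x, (∑ i, ∑ j, pderiv' (fun y => γ y j) i x * pderiv' f i x * pderiv' f j x)
          * (π x * Real.exp (f x)) :=
  integrated_gamma_I_drift_jacobian_general d π hπ hπpos γ hγ hstat f hf hfc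

end
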